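/- arXiv:1804.10227 — 7 statements merged into one kernel-verified Lean document; each statement's English description precedes it below -/
import Mathlib

section
/- Persistence: For any HT-trace ⟨H,T⟩ of length λ (finite or infinite), any temporal formula φ, and any time point k with 0 ≤ k ≤ λ, k ≠ ω, if ⟨H,T⟩, k ⊨ φ then ⟨T,T⟩, k ⊨ φ. -/
open scoped Classical

/-- Temporal formulas over atoms `α`, with past and future operators. -/
inductive TForm (α : Type) : Type
  | atom : α → TForm α
  | bot  : TForm α
  | top  : TForm α
  | and  : TForm α → TForm α → TForm α
  | or   : TForm α → TForm α → TForm α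
  | imp  : TForm α → TForm α → TForm α
  | prev : TForm α → TForm α            -- ● previous
  | wprev : TForm α → TForm α           -- weak previous
  | since : TForm α → TForm α → TForm α -- S
  | trigger : TForm α → TForm α → TForm α -- T
  | next : TForm α → TForm α            -- ○ next
  | wnext : TForm α → TForm α           -- weak next
  | untl : TForm α → TForm α → TForm α  -- U
  | rels : TForm α → TForm α → TForm α  -- R

variable {α : Type}

/-- THT satisfaction: `sat lam φ H T k` means ⟨H,T⟩,k ⊨ φ on an HT-trace of length `lam`. -/
def sat (lam : ℕ∞) : TForm α → (ℕ → Set α) → (ℕ → Set α) → ℕ → Prop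
  | .atom a, H, _, k => a ∈ H k
  | .bot, _, _, _ => False
  | .top, _, _, _ => True
  | .and φ ψ, H, T, k => sat lam φ H T k ∧ sat lam ψ H T k
  | .or φ ψ, H, T, k => sat lam φ H T k ∨ sat lam ψ H T k
  | .imp φ ψ, H, T, k =>
      (sat lam φ H T k → sat lam ψ H T k) ∧ (sat lam φ T T k → sat lam ψ T T k)
  | .prev φ, H, T, k => 0 < k ∧ sat lam φ H T (k - 1)
  | .wprev φ, H, T, k => k = 0 ∨ sat lam φ H T (k - 1)
  | .since φ ψ, H, T, k =>
      ∃ j, j ≤ k ∧ sat lam ψ H T j ∧ ∀ i, j < i → i ≤ k → sat lam φ H T i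
  | .trigger φ ψ, H, T, k =>
      ∀ j, j ≤ k → sat lam ψ H T j ∨ ∃ i, j < i ∧ i ≤ k ∧ sat lam φ H T i
  | .next φ, H, T, k => ((k : ℕ∞) + 1 ≤ lam) ∧ sat lam φ H T (k + 1)
  | .wnext φ, H, T, k => ¬ ((k : ℕ∞) + 1 ≤ lam) ∨ sat lam φ H T (k + 1)
  | .untl φ ψ, H, T, k =>
      ∃ j, k ≤ j ∧ (j : ℕ∞) ≤ lam ∧ sat lam ψ H T j ∧ ∀ i, k ≤ i → i < j → sat lam φ H T i
  | .rels φ ψ, H, T, k =>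
      ∀ j, k ≤ j → (j : ℕ∞) ≤ lam → sat lam ψ H T j ∨ ∃ i, k ≤ i ∧ i < j ∧ sat lam φ H T i

/-- Classical LTL satisfaction on a (possibly finite) trace `T` of length `lam`. -/
def satL (lam : ℕ∞) : TForm α → (ℕ → Set α) → ℕ → Prop
  | .atom a, T, k => a ∈ T k
  | .bot, _, _ => False
  | .top, _, _ => True
  | .and φ ψ, T, k => satL lam φ T k ∧ satL lam ψ T k
  | .or φ ψ, T, k => satL lam φ T k ∨ satL lam ψ T k
  | .imp φ ψ, T, k => satL lam φ T k → satL lam ψ T k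
  | .prev φ, T, k => 0 < k ∧ satL lam φ T (k - 1)
  | .wprev φ, T, k => k = 0 ∨ satL lam φ T (k - 1)
  | .since φ ψ, T, k =>
      ∃ j, j ≤ k ∧ satL lam ψ T j ∧ ∀ i, j < i → i ≤ k → satL lam φ T i
  | .trigger φ ψ, T, k =>
      ∀ j, j ≤ k → satL lam ψ T j ∨ ∃ i, j < i ∧ i ≤ k ∧ satL lam φ T i
  | .next φ, T, k => ((k : ℕ∞) + 1 ≤ lam) ∧ satL lam φ T (k + 1)
  | .wnext φ, T, k => ¬ ((k : ℕ∞) + 1 ≤ lam) ∨ satL lam φ T (k + 1)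
  | .untl φ ψ, T, k =>
      ∃ j, k ≤ j ∧ (j : ℕ∞) ≤ lam ∧ satL lam ψ T j ∧ ∀ i, k ≤ i → i < j → satL lam φ T i
  | .rels φ ψ, T, k =>
      ∀ j, k ≤ j → (j : ℕ∞) ≤ lam → satL lam ψ T j ∨ ∃ i, k ≤ i ∧ i < j ∧ satL lam φ T i

/-- ¬φ := φ → ⊥ -/
def TForm.neg (φ : TForm α) : TForm α := .imp φ .bot
/-- F (final) := ¬○⊤ -/
def TForm.F : TForm α := TForm.neg (.next .top)
/-- I (initial) := ¬●⊤ -/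
def TForm.I : TForm α := TForm.neg (.prev .top)
/-- □φ := ⊥ R φ (always afterward) -/
def TForm.always (φ : TForm α) : TForm α := .rels .bot φ
/-- ◇φ := ⊤ U φ (eventually afterward) -/
def TForm.ev (φ : TForm α) : TForm α := .untl .top φ
/-- ■φ := ⊥ T φ (always before) -/
def TForm.alwaysB (φ : TForm α) : TForm α := .trigger .bot φ
/-- ♦φ := ⊤ S φ (eventually before) -/
def TForm.evB (φ : TForm α) : TForm α := .since .top φ

/-- ⟨H,T⟩ is an HT-trace: H_i ⊆ T_i for all i. -/
def isHT (H T : ℕ → Set α) : Prop := ∀ i, H i ⊆ T i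

/-- Implication-free formulas. -/
def ImpFree : TForm α → Prop
  | .imp _ _ => False
  | .and φ ψ => ImpFree φ ∧ ImpFree ψ
  | .or φ ψ => ImpFree φ ∧ ImpFree ψ
  | .since φ ψ => ImpFree φ ∧ ImpFree ψ
  | .trigger φ ψ => ImpFree φ ∧ ImpFree ψ
  | .untl φ ψ => ImpFree φ ∧ ImpFree ψ
  | .rels φ ψ => ImpFree φ ∧ ImpFree ψ
  | .prev φ => ImpFree φ
  | .wprev φ => ImpFree φ
  | .next φ => ImpFree φ
  | .wnext φ => ImpFree φ
  | _ => True

/-- Boolean dual: swaps ∧/∨, ⊤/⊥, U/R, S/T, ○/ŏ, ●/weak-previous. -/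
def dual : TForm α → TForm α
  | .atom a => .atom a
  | .bot => .top
  | .top => .bot
  | .and φ ψ => .or (dual φ) (dual ψ)
  | .or φ ψ => .and (dual φ) (dual ψ)
  | .imp φ ψ => .imp (dual φ) (dual ψ)
  | .prev φ => .wprev (dual φ)
  | .wprev φ => .prev (dual φ)
  | .since φ ψ => .trigger (dual φ) (dual ψ)
  | .trigger φ ψ => .since (dual φ) (dual ψ)
  | .next φ => .wnext (dual φ)
  | .wnext φ => .next (dual φ)
  | .untl φ ψ => .rels (dual φ) (dual ψ)
  | .rels φ ψ => .untl (dual φ) (dual ψ)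

/-- Time-reversal σ: swaps each temporal connective with its past/future mirror. -/
def tswap : TForm α → TForm α
  | .atom a => .atom a
  | .bot => .bot
  | .top => .top
  | .and φ ψ => .and (tswap φ) (tswap ψ)
  | .or φ ψ => .or (tswap φ) (tswap ψ)
  | .imp φ ψ => .imp (tswap φ) (tswap ψ)
  | .prev φ => .next (tswap φ)
  | .next φ => .prev (tswap φ)
  | .wprev φ => .wnext (tswap φ)
  | .wnext φ => .wprev (tswap φ)
  | .since φ ψ => .untl (tswap φ) (tswap ψ)
  | .untl φ ψ => .since (tswap φ) (tswap ψ)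
  | .trigger φ ψ => .rels (tswap φ) (tswap ψ)
  | .rels φ ψ => .trigger (tswap φ) (tswap ψ)

/-! Induction on `φ`: every connective except implication is monotone in the here-trace, and
the semantics of implication already contains its ⟨T,T⟩ clause as a conjunct. -/
theorem persistence_general {α : Type} (lam : ℕ∞) (H T : ℕ → Set α) (hHT : isHT H T)
    (φ : TForm α) (k : ℕ)
    (h : sat lam φ H T k) : sat lam φ T T k := by
  induction φ generalizing k with
  | atom a => exact hHT k h
  | bot | top => exact h
  | and φ ψ ihφ ihψ => exact ⟨ihφ k h.1, ihψ k h.2⟩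
  | or φ ψ ihφ ihψ => exact h.imp (ihφ k) (ihψ k)
  | imp φ ψ => exact ⟨h.2, h.2⟩
  | prev φ ih | next φ ih => exact ⟨h.1, ih _ h.2⟩
  | wprev φ ih | wnext φ ih => exact h.imp_right (ih _)
  | since φ ψ ihφ ihψ =>
    obtain ⟨j, hjk, hψ, hφ⟩ := h
    exact ⟨j, hjk, ihψ j hψ, fun i hji hik => ihφ i (hφ i hji hik)⟩
  | untl φ ψ ihφ ihψ =>
    obtain ⟨j, hkj, hjl, hψ, hφ⟩ := h
    exact ⟨j, hkj, hjl, ihψ j hψ, fun i hki hij => ihφ i (hφ i hki hij)⟩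
  | trigger φ ψ ihφ ihψ =>
    exact fun j hjk => (h j hjk).imp (ihψ j) fun ⟨i, hji, hik, hφ⟩ => ⟨i, hji, hik, ihφ i hφ⟩
  | rels φ ψ ihφ ihψ =>
    exact fun j hkj hjl =>
      (h j hkj hjl).imp (ihψ j) fun ⟨i, hki, hij, hφ⟩ => ⟨i, hki, hij, ihφ i hφ⟩

/-- Persistence: if ⟨H,T⟩,k ⊨ φ then ⟨T,T⟩,k ⊨ φ. -/
theorem persistence {α : Type} (lam : ℕ∞) (H T : ℕ → Set α) (hHT : isHT H T)
    (φ : TForm α) (k : ℕ) (hk : (k : ℕ∞) ≤ lam)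
    (h : sat lam φ H T k) : sat lam φ T T k :=
  persistence_general lam H T hHT φ k h
end

section
/- For implication-free formulas, THT and LTL equivalence coincide: if φ and ψ are temporal formulas containing no implication (hence no negation), then φ and ψ are equivalent in LTL (over possibly infinite traces) iff φ and ψ are equivalent in THT. -/
open scoped Classical

variable {α : Type}

/-!
Without implication, no clause of THT satisfaction ever consults the "there" trace `T`, so
satisfaction at `⟨H, T⟩` is LTL satisfaction on the trace `H`. Hence THT equivalence is LTL
equivalence over all traces `H`, and the total HT-traces `⟨T, T⟩` already reach every trace.
-/

theorem sat_eq_satL_of_impFree {lam : ℕ∞} {φ : TForm α} (hφ : ImpFree φ) (H T : ℕ → Set α) :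
    sat lam φ H T = satL lam φ H := by
  induction φ with
  | imp => exact hφ.elim
  | _ => funext k; simp_all [sat, satL, ImpFree]

/-- for implication-free formulas, LTL equivalence and THT equivalence coincide. -/
theorem impfree_equiv {α : Type} (φ ψ : TForm α) (hφ : ImpFree φ) (hψ : ImpFree ψ) :
    (∀ (lam : ℕ∞) (T : ℕ → Set α) (k : ℕ), (k : ℕ∞) ≤ lam →
        (satL lam φ T k ↔ satL lam ψ T k))
    ↔
    (∀ (lam : ℕ∞) (H T : ℕ → Set α), isHT H T → ∀ k : ℕ, (k : ℕ∞) ≤ lam →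
        (sat lam φ H T k ↔ sat lam ψ H T k)) := by
  simp only [sat_eq_satL_of_impFree hφ, sat_eq_satL_of_impFree hψ]
  constructor
  · intro hL lam H _ _ k hk
    exact hL lam H k hk
  · intro hTHT lam T k hk
    exact hTHT lam T T (fun _ => subset_rfl) k hk
end

section
/- Boolean Duality for THT: let δ(φ) replace each connective in an implication-free formula φ by its dual (∧/∨, ⊤/⊥, U/R, ○/ŏ, □/◇, S/T, ●/ŏ-past, ■/♦). Then for implication-free formulas φ, ψ, φ and ψ are THT-equivalent iff δ(φ) and δ(ψ) are THT-equivalent. -/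
open scoped Classical

variable {α : Type}

/-! An implication-free formula never consults the there-component `T`: it is evaluated
classically on `H`. On classical traces the dual `δ φ` holds exactly where `φ` fails on the
complemented trace `i ↦ (H i)ᶜ`, which is again a (total) HT-trace, so THT-equivalence of `φ`
and `ψ` transfers to `δ φ` and `δ ψ`. The converse follows because `δ` is an involution. -/

theorem dual_dual (φ : TForm α) : dual (dual φ) = φ := by
  induction φ <;> simp only [dual, *]

theorem ImpFree.dual {φ : TForm α} (h : ImpFree φ) : ImpFree (dual φ) := by
  induction φ <;> simp_all only [ImpFree, _root_.dual, and_self]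

theorem ImpFree.sat_iff_satL {lam : ℕ∞} {φ : TForm α} {H T : ℕ → Set α} (h : ImpFree φ)
    (k : ℕ) : sat lam φ H T k ↔ satL lam φ H k := by
  induction φ generalizing k <;> simp_all [ImpFree, sat, satL]

theorem satL_dual_iff_not_satL_compl {lam : ℕ∞} {φ : TForm α} {H : ℕ → Set α}
    (h : ImpFree φ) (k : ℕ) :
    satL lam (dual φ) H k ↔ ¬ satL lam φ (fun i => (H i)ᶜ) k := by
  induction φ generalizing k with
  | imp => exact h.elim
  | atom | bot | top => simp [satL, dual]
  | and _ _ ih₁ ih₂ | or _ _ ih₁ ih₂ => simp only [satL, dual, ih₁ h.1, ih₂ h.2]; tauto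
  | prev _ ih | wprev _ ih => simp only [satL, dual, ih h, Nat.pos_iff_ne_zero]; tauto
  | next _ ih | wnext _ ih => simp only [satL, dual, ih h]; tauto
  | since _ _ ih₁ ih₂ | trigger _ _ ih₁ ih₂ | untl _ _ ih₁ ih₂ | rels _ _ ih₁ ih₂ =>
    simp only [satL, dual, ih₁ h.1, ih₂ h.2]
    push Not
    simp only [imp_iff_not_or]

theorem sat_dual_iff_not_sat_compl {lam : ℕ∞} {φ : TForm α} {H T : ℕ → Set α}
    (h : ImpFree φ) (k : ℕ) :
    sat lam (dual φ) H T k ↔ ¬ sat lam φ (fun i => (H i)ᶜ) (fun i => (H i)ᶜ) k := by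
  rw [h.dual.sat_iff_satL, h.sat_iff_satL, satL_dual_iff_not_satL_compl h]

def THTEquiv (φ ψ : TForm α) : Prop :=
  ∀ (lam : ℕ∞) (H T : ℕ → Set α), isHT H T → ∀ k : ℕ, (k : ℕ∞) ≤ lam →
    (sat lam φ H T k ↔ sat lam ψ H T k)

theorem THTEquiv.dual {φ ψ : TForm α} (hφ : ImpFree φ) (hψ : ImpFree ψ) (h : THTEquiv φ ψ) :
    THTEquiv (_root_.dual φ) (_root_.dual ψ) := by
  intro lam H T _ k hk
  rw [sat_dual_iff_not_sat_compl hφ, sat_dual_iff_not_sat_compl hψ]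
  exact not_congr (h lam _ _ (fun _ => subset_rfl) k hk)

/-- Boolean Duality: for implication-free φ, ψ:
    φ ≡ ψ in THT iff δ(φ) ≡ δ(ψ) in THT. -/
theorem boolean_duality {α : Type} (φ ψ : TForm α) (hφ : ImpFree φ) (hψ : ImpFree ψ) :
    (∀ (lam : ℕ∞) (H T : ℕ → Set α), isHT H T → ∀ k : ℕ, (k : ℕ∞) ≤ lam →
        (sat lam φ H T k ↔ sat lam ψ H T k))
    ↔
    (∀ (lam : ℕ∞) (H T : ℕ → Set α), isHT H T → ∀ k : ℕ, (k : ℕ∞) ≤ lam →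
        (sat lam (dual φ) H T k ↔ sat lam (dual ψ) H T k)) := by
  refine ⟨THTEquiv.dual hφ hψ, fun h => ?_⟩
  simpa only [THTEquiv, dual_dual] using THTEquiv.dual hφ.dual hψ.dual h
end

section
/- Temporal reversal lemma: there exists a mapping ϱ on finite HT-traces preserving length such that for any finite HT-trace ⟨H,T⟩ of length n, any formula φ, and any k with 0 ≤ k ≤ n, ⟨H,T⟩, k ⊨ φ iff ϱ(⟨H,T⟩), n−k ⊨ σ(φ), where σ swaps each temporal connective with its time-reversed counterpart (U/S, R/T, ○/●, ŏ/weak previous, □/■, ◇/♦). -/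
open scoped Classical

variable {α : Type}

/-! Reflecting positions `i ↦ n - i` is an involution of `{0, …, n}` that turns "at some / every
position between `j` and `k`" into "between `n - k` and `n - j`", so each past operator at `k` is
its future mirror at `n - k` on the reversed trace. Only `●` and `S` need a real argument: `○` and
`U` follow by reading the same correspondence from the reversed trace back, and the weak operators
`ŏ`, weak previous, `R`, `T` are classical duals of the strong ones. -/

def Mirrored (n : ℕ) (P P' : ℕ → Prop) : Prop :=
  ∀ i ≤ n, P i ↔ P' (n - i)

def reverseTrace {β : Type*} (n : ℕ) (X : ℕ → β) : ℕ → β :=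
  fun i => X (n - i)

namespace Mirrored

variable {n : ℕ} {P P' Q Q' : ℕ → Prop}

theorem symm (h : Mirrored n P P') : Mirrored n P' P := fun i hi => by
  simpa only [Nat.sub_sub_self hi] using (h (n - i) (Nat.sub_le n i)).symm

theorem not (h : Mirrored n P P') : Mirrored n (fun i => ¬ P i) (fun i => ¬ P' i) :=
  fun i hi => not_congr (h i hi)

theorem of_iff {R R' : ℕ → Prop} (h : Mirrored n P P') (hR : ∀ i, P i ↔ R i)
    (hR' : ∀ i, P' i ↔ R' i) : Mirrored n R R' :=
  fun i hi => (hR i).symm.trans ((h i hi).trans (hR' _))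

theorem prev (h : Mirrored n P P') :
    Mirrored n (fun k => 0 < k ∧ P (k - 1)) (fun k => (k : ℕ∞) + 1 ≤ n ∧ P' (k + 1)) := by
  intro k hk
  simp only [show ((n - k : ℕ) : ℕ∞) + 1 ≤ n ↔ n - k + 1 ≤ n by norm_cast]
  rcases Nat.eq_zero_or_pos k with rfl | hk0
  · simp
  · rw [h (k - 1) (by omega), show n - (k - 1) = n - k + 1 by omega]
    exact and_congr (by omega) Iff.rfl

theorem next (h : Mirrored n P P') :
    Mirrored n (fun k => (k : ℕ∞) + 1 ≤ n ∧ P (k + 1)) (fun k => 0 < k ∧ P' (k - 1)) :=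
  h.symm.prev.symm

theorem wprev (h : Mirrored n P P') :
    Mirrored n (fun k => k = 0 ∨ P (k - 1)) (fun k => ¬ ((k : ℕ∞) + 1 ≤ n) ∨ P' (k + 1)) :=
  h.not.prev.not.of_iff (fun _ => by rw [not_and_not_right, Nat.pos_iff_ne_zero, imp_iff_not_or, not_ne_iff])
    (fun _ => by rw [not_and_not_right, imp_iff_not_or])

theorem wnext (h : Mirrored n P P') :
    Mirrored n (fun k => ¬ ((k : ℕ∞) + 1 ≤ n) ∨ P (k + 1)) (fun k => k = 0 ∨ P' (k - 1)) :=
  h.symm.wprev.symm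

theorem since (hP : Mirrored n P P') (hQ : Mirrored n Q Q') :
    Mirrored n (fun k => ∃ j, j ≤ k ∧ Q j ∧ ∀ i, j < i → i ≤ k → P i)
      (fun k => ∃ j, k ≤ j ∧ (j : ℕ∞) ≤ n ∧ Q' j ∧ ∀ i, k ≤ i → i < j → P' i) := by
  intro k hk
  simp only [Nat.cast_le]
  constructor
  · rintro ⟨j, hjk, hQj, hPj⟩
    refine ⟨n - j, by omega, Nat.sub_le n j, (hQ j (by omega)).mp hQj, fun i hi hij => ?_⟩
    have hPi := (hP (n - i) (by omega)).mp (hPj (n - i) (by omega) (by omega))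
    rwa [Nat.sub_sub_self (by omega)] at hPi
  · rintro ⟨j, hkj, hjn, hQ'j, hP'j⟩
    refine ⟨n - j, by omega, (hQ (n - j) (by omega)).mpr ?_, fun i hi hik => ?_⟩
    · rwa [Nat.sub_sub_self hjn]
    · exact (hP i (by omega)).mpr (hP'j (n - i) (by omega) (by omega))

theorem untl (hP : Mirrored n P P') (hQ : Mirrored n Q Q') :
    Mirrored n (fun k => ∃ j, k ≤ j ∧ (j : ℕ∞) ≤ n ∧ Q j ∧ ∀ i, k ≤ i → i < j → P i)
      (fun k => ∃ j, j ≤ k ∧ Q' j ∧ ∀ i, j < i → i ≤ k → P' i) :=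
  (hP.symm.since hQ.symm).symm

theorem trigger (hP : Mirrored n P P') (hQ : Mirrored n Q Q') :
    Mirrored n (fun k => ∀ j, j ≤ k → Q j ∨ ∃ i, j < i ∧ i ≤ k ∧ P i)
      (fun k => ∀ j, k ≤ j → (j : ℕ∞) ≤ n → Q' j ∨ ∃ i, k ≤ i ∧ i < j ∧ P' i) :=
  (hP.not.since hQ.not).not.of_iff (fun _ => by push Not; simp only [or_iff_not_imp_left])
    (fun _ => by push Not; simp only [or_iff_not_imp_left])

theorem rels (hP : Mirrored n P P') (hQ : Mirrored n Q Q') :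
    Mirrored n (fun k => ∀ j, k ≤ j → (j : ℕ∞) ≤ n → Q j ∨ ∃ i, k ≤ i ∧ i < j ∧ P i)
      (fun k => ∀ j, j ≤ k → Q' j ∨ ∃ i, j < i ∧ i ≤ k ∧ P' i) :=
  (hP.symm.trigger hQ.symm).symm

end Mirrored

theorem sat_tswap_reverseTrace (n : ℕ) (φ : TForm α) (H T : ℕ → Set α) :
    Mirrored n (sat n φ H T) (sat n (tswap φ) (reverseTrace n H) (reverseTrace n T)) := by
  induction φ generalizing H with
  | atom a => intro k hk; simp only [sat, tswap, reverseTrace, Nat.sub_sub_self hk]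
  | bot | top => exact fun _ _ => Iff.rfl
  | and φ ψ ihφ ihψ => exact fun k hk => and_congr (ihφ H k hk) (ihψ H k hk)
  | or φ ψ ihφ ihψ => exact fun k hk => or_congr (ihφ H k hk) (ihψ H k hk)
  | imp φ ψ ihφ ihψ =>
    exact fun k hk => and_congr (imp_congr (ihφ H k hk) (ihψ H k hk))
      (imp_congr (ihφ T k hk) (ihψ T k hk))
  | prev φ ih => exact (ih H).prev
  | wprev φ ih => exact (ih H).wprev
  | next φ ih => exact (ih H).next
  | wnext φ ih => exact (ih H).wnext
  | since φ ψ ihφ ihψ => exact (ihφ H).since (ihψ H)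
  | trigger φ ψ ihφ ihψ => exact (ihφ H).trigger (ihψ H)
  | untl φ ψ ihφ ihψ => exact (ihφ H).untl (ihψ H)
  | rels φ ψ ihφ ihψ => exact (ihφ H).rels (ihψ H)

/-- Temporal reversal lemma: there is a length-preserving mapping ϱ on finite
    traces (applied componentwise to the HT-trace) such that
    ⟨H,T⟩,k ⊨ φ iff ϱ(⟨H,T⟩),n−k ⊨ σ(φ). -/
theorem temporal_reversal {α : Type} :
    ∃ ρ : ℕ → (ℕ → Set α) → (ℕ → Set α),
      ∀ (n : ℕ) (H T : ℕ → Set α), isHT H T →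
        ∀ (φ : TForm α) (k : ℕ), k ≤ n →
          (sat (n : ℕ∞) φ H T k ↔ sat (n : ℕ∞) (tswap φ) (ρ n H) (ρ n T) (n - k)) :=
  ⟨reverseTrace, fun n H T _ φ k hk => sat_tswap_reverseTrace n φ H T k hk⟩
end

section
/- Under the excluded-middle axiom schema, models are total: an HT-trace ⟨H,T⟩ of length λ satisfies □(a ∨ ¬a) at time 0 for every atom a ∈ 𝒜 if and only if H = T. -/
open scoped Classical

variable {α : Type}

theorem sat_always_iff {lam : ℕ∞} {φ : TForm α} {H T : ℕ → Set α} {k : ℕ} :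
    sat lam φ.always H T k ↔ ∀ j, k ≤ j → (j : ℕ∞) ≤ lam → sat lam φ H T j := by
  simp [TForm.always, sat]

theorem sat_neg_atom_iff {lam : ℕ∞} {a : α} {H T : ℕ → Set α} {k : ℕ} (hk : H k ⊆ T k) :
    sat lam (TForm.neg (.atom a)) H T k ↔ a ∉ T k := by
  simp only [TForm.neg, sat, imp_false]
  exact ⟨And.right, fun ha => ⟨fun h => ha (hk h), ha⟩⟩

theorem sat_excludedMiddle_atom_iff {lam : ℕ∞} {a : α} {H T : ℕ → Set α} {k : ℕ}
    (hk : H k ⊆ T k) :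
    sat lam (.or (.atom a) (TForm.neg (.atom a))) H T k ↔ (a ∈ T k → a ∈ H k) := by
  rw [sat, sat_neg_atom_iff hk, sat]
  tauto

/-- an HT-trace satisfies □(a ∨ ¬a) at 0 for every atom a iff it is total
    (H and T coincide on all time points of the trace). -/
theorem excluded_middle_total {α : Type} (lam : ℕ∞) (H T : ℕ → Set α) (hHT : isHT H T) :
    (∀ a : α, sat lam (TForm.always (.or (.atom a) (TForm.neg (.atom a)))) H T 0)
    ↔ (∀ i : ℕ, (i : ℕ∞) ≤ lam → H i = T i) := by
  simp only [sat_always_iff, zero_le, true_implies, sat_excludedMiddle_atom_iff (hHT _)]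
  exact ⟨fun h i hi => (hHT i).antisymm fun a => h a i hi,
    fun h a i hi ha => (h i hi).ge ha⟩
end

section
/- The formula □◇a has no temporal equilibrium model among infinite traces: for any total infinite HT-trace ⟨T,T⟩ satisfying □◇a at time 0, there exists H < T such that ⟨H,T⟩ also satisfies □◇a at time 0. -/
open scoped Classical

variable {α : Type}

/-! Without implications, `□◇a` only asks that `a` occur in `H` infinitely often, whatever `T` is.
Removing `a` from one state of `T` where it occurs therefore yields a strictly smaller `H` that still
satisfies `□◇a`, so `⟨T,T⟩` is never in equilibrium. -/

open Filter

theorem sat_always_ev_atom_iff {a : α} {H T : ℕ → Set α} {n : ℕ} :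
    sat ⊤ (TForm.always (TForm.ev (.atom a))) H T n ↔ ∃ᶠ j in atTop, a ∈ H j := by
  simp only [TForm.always, TForm.ev, sat, le_top, true_and, and_false, exists_const, or_false,
    implies_true, and_true, true_implies, frequently_atTop]
  exact ⟨fun h k => (h (max k n) (le_max_right k n)).imp fun j hj =>
      ⟨(le_max_left k n).trans hj.1, hj.2⟩,
    fun h k _ => h k⟩

/-- □◇a has no temporal equilibrium model among infinite traces:
    any total infinite model ⟨T,T⟩ of □◇a admits some H < T with ⟨H,T⟩ ⊨ □◇a. -/
theorem no_infinite_equilibrium {α : Type} (a : α) (T : ℕ → Set α)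
    (h : sat ⊤ (TForm.always (TForm.ev (.atom a))) T T 0) :
    ∃ H : ℕ → Set α,
      ((∀ i : ℕ, H i ⊆ T i) ∧ ∃ j : ℕ, H j ⊂ T j) ∧
      sat ⊤ (TForm.always (TForm.ev (.atom a))) H T 0 := by
  have ha : ∃ᶠ j in atTop, a ∈ T j := sat_always_ev_atom_iff.mp h
  obtain ⟨i, hi⟩ := ha.exists
  refine ⟨Function.update T i (T i \ {a}), ⟨fun j => ?_, i, ?_⟩, sat_always_ev_atom_iff.mpr ?_⟩
  · rcases eq_or_ne j i with rfl | hj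
    · simp
    · simp [Function.update_of_ne hj]
  · simpa using Set.sdiff_singleton_ssubset.mpr hi
  · refine (ha.and_eventually (eventually_ne_atTop i)).mono fun j ⟨haj, hj⟩ => ?_
    rwa [Function.update_of_ne hj]
end

section
/- Bounded translation correctness: let P be a temporal logic program over atoms 𝒜 and λ ∈ ℕ. For a trace T = ⟨T_i⟩_{i=0}^λ and the set X = {a_i : a ∈ T_i, 0 ≤ i ≤ λ} of time-stamped atoms, T is a temporal stable model of P (of length λ) iff X is a stable model of the regular logic program τ_λ(P). -/
open scoped Classical

variable {α : Type}

/-- Regular literals: a or ¬a. -/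
inductive RLit (β : Type) : Type
  | pos : β → RLit β
  | neg : β → RLit β

/-- Temporal literals: a, ¬a, ●a, ¬●a. -/
inductive TLit (α : Type) : Type
  | pos : α → TLit α
  | neg : α → TLit α
  | ppos : α → TLit α
  | pneg : α → TLit α

def RLit.form {α : Type} : RLit α → TForm α
  | .pos a => .atom a
  | .neg a => TForm.neg (.atom a)

def TLit.form {α : Type} : TLit α → TForm α
  | .pos a => .atom a
  | .neg a => TForm.neg (.atom a)
  | .ppos a => .prev (.atom a)
  | .pneg a => TForm.neg (.prev (.atom a))

def conj {α β : Type} (f : β → TForm α) : List β → TForm α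
  | [] => .top
  | l :: ls => .and (f l) (conj f ls)

def disj {α β : Type} (f : β → TForm α) : List β → TForm α
  | [] => .bot
  | l :: ls => .or (f l) (disj f ls)

/-- A temporal logic program: initial rules B → A, dynamic rules ŏ□(B → A),
    final rules □(F → (B → A)); each rule is given as a pair (body, head). -/
structure TProgram (α : Type) where
  ini : Set (List (RLit α) × List (RLit α))
  dyn : Set (List (TLit α) × List (TLit α))
  fin : Set (List (RLit α) × List (RLit α))

def iniForm {α : Type} (r : List (RLit α) × List (RLit α)) : TForm α :=
  .imp (conj RLit.form r.1) (disj RLit.form r.2)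

def dynForm {α : Type} (r : List (TLit α) × List (TLit α)) : TForm α :=
  .wnext (TForm.always (.imp (conj TLit.form r.1) (disj TLit.form r.2)))

def finForm {α : Type} (r : List (RLit α) × List (RLit α)) : TForm α :=
  TForm.always (.imp TForm.F (.imp (conj RLit.form r.1) (disj RLit.form r.2)))

/-- ⟨H,T⟩ of length lam satisfies (all rules of) the temporal program P at time 0. -/
def ProgSat {α : Type} (lam : ℕ∞) (H T : ℕ → Set α) (P : TProgram α) : Prop :=
  (∀ r ∈ P.ini, sat lam (iniForm r) H T 0) ∧
  (∀ r ∈ P.dyn, sat lam (dynForm r) H T 0) ∧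
  (∀ r ∈ P.fin, sat lam (finForm r) H T 0)

/-- T is a temporal stable model of P of finite length n (equilibrium model in TEL_f). -/
def TStable {α : Type} (P : TProgram α) (n : ℕ) (T : ℕ → Set α) : Prop :=
  ProgSat (n : ℕ∞) T T P ∧
  ¬ ∃ H : ℕ → Set α,
      ((∀ i, i ≤ n → H i ⊆ T i) ∧ ∃ i, i ≤ n ∧ H i ≠ T i) ∧
      ProgSat (n : ℕ∞) H T P

/-- HT ("here") satisfaction of a regular literal w.r.t. interpretations ⟨Y,X⟩. -/
def rlitSatHT {β : Type} (Y X : Set β) : RLit β → Prop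
  | .pos b => b ∈ Y
  | .neg b => b ∉ X

/-- Classical satisfaction of a regular literal in X. -/
def rlitSatC {β : Type} (X : Set β) : RLit β → Prop
  | .pos b => b ∈ X
  | .neg b => b ∉ X

/-- A regular (disjunctive) rule: head ← body. -/
structure RRule (β : Type) where
  body : List (RLit β)
  head : List (RLit β)

/-- HT satisfaction of a regular rule at ⟨Y,X⟩ (here-and-there implication). -/
def rruleSatHT {β : Type} (Y X : Set β) (r : RRule β) : Prop :=
  ((∀ l ∈ r.body, rlitSatHT Y X l) → ∃ l ∈ r.head, rlitSatHT Y X l) ∧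
  ((∀ l ∈ r.body, rlitSatC X l) → ∃ l ∈ r.head, rlitSatC X l)

/-- X is a stable model of the regular program P (equilibrium model of HT). -/
def Stable {β : Type} (P : Set (RRule β)) (X : Set β) : Prop :=
  (∀ r ∈ P, rruleSatHT X X r) ∧ ¬ ∃ Y : Set β, Y ⊂ X ∧ ∀ r ∈ P, rruleSatHT Y X r

/-- Translation of a regular literal at time point k to a time-stamped literal. -/
def trR {α : Type} (k : ℕ) : RLit α → RLit (α × ℕ)
  | .pos a => .pos (a, k)
  | .neg a => .neg (a, k)

/-- Translation of a temporal literal at time point k to a time-stamped literal. -/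
def trT {α : Type} (k : ℕ) : TLit α → RLit (α × ℕ)
  | .pos a => .pos (a, k)
  | .neg a => .neg (a, k)
  | .ppos a => .pos (a, k - 1)
  | .pneg a => .neg (a, k - 1)

/-- The bounded translation τ_λ(P): initial rules at 0, dynamic rules at k = 1..λ,
    final rules at λ. -/
def tau {α : Type} (n : ℕ) (P : TProgram α) : Set (RRule (α × ℕ)) :=
  {r | ∃ p ∈ P.ini, r = ⟨p.1.map (trR 0), p.2.map (trR 0)⟩} ∪
  {r | ∃ p ∈ P.dyn, ∃ k, 1 ≤ k ∧ k ≤ n ∧ r = ⟨p.1.map (trT k), p.2.map (trT k)⟩} ∪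
  {r | ∃ p ∈ P.fin, r = ⟨p.1.map (trR n), p.2.map (trR n)⟩}

/-!
Under the correspondence `a ∈ H i ↔ (a, i) ∈ Y` for `i ≤ λ`, a literal of a temporal rule holds
in ⟨H, T⟩ at instant `k` exactly when its time-stamped translation holds in ⟨Y, X⟩: negation
only looks at the "there" component, and `●a` at `k ≥ 1` reads instant `k - 1`. On the rule
level, initial rules are evaluated at `0`, `ŏ□` ranges over the instants `1, …, λ`, and `F`
singles out `λ`; so ⟨H, T⟩ satisfies `P` iff ⟨Y, X⟩ satisfies `τ_λ(P)`. Finally the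
correspondence turns traces strictly below `T` on `0, …, λ` into strict subsets of `X`
and back, so the two minimality conditions agree.
-/

/-- `Y` is the paper's set `{a_i : a ∈ H_i}` of time-stamped atoms, read on the instants
`0, …, n`. -/
def TraceEncodes (n : ℕ) (H : ℕ → Set α) (Y : Set (α × ℕ)) : Prop :=
  ∀ (a : α) (i : ℕ), i ≤ n → (a ∈ H i ↔ (a, i) ∈ Y)

section Satisfaction

variable {lam : ℕ∞} {H T : ℕ → Set α} {k : ℕ}

theorem sat_neg_iff {φ : TForm α} (hpers : sat lam φ H T k → sat lam φ T T k) :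
    sat lam φ.neg H T k ↔ ¬ sat lam φ T T k :=
  ⟨And.right, fun h => ⟨fun hφ => h (hpers hφ), h⟩⟩

theorem sat_conj {β : Type} (f : β → TForm α) (L : List β) :
    sat lam (conj f L) H T k ↔ ∀ x ∈ L, sat lam (f x) H T k := by
  induction L with
  | nil => simp [conj, sat]
  | cons x L ih => simp [conj, sat, ih]

theorem sat_disj {β : Type} (f : β → TForm α) (L : List β) :
    sat lam (disj f L) H T k ↔ ∃ x ∈ L, sat lam (f x) H T k := by
  induction L with
  | nil => simp [disj, sat]
  | cons x L ih => simp [disj, sat, ih]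

theorem sat_always (φ : TForm α) :
    sat lam φ.always H T k ↔ ∀ j, k ≤ j → (j : ℕ∞) ≤ lam → sat lam φ H T j := by
  simp [TForm.always, sat]

theorem sat_F (j : ℕ) : sat lam TForm.F H T j ↔ ¬ (j : ℕ∞) + 1 ≤ lam := by
  simp [TForm.F, TForm.neg, sat]

theorem sat_wnext_always_zero_iff {n : ℕ} (φ : TForm α) :
    sat n (.wnext φ.always) H T 0 ↔ ∀ k, 1 ≤ k → k ≤ n → sat n φ H T k := by
  simp only [sat, sat_always, Nat.cast_zero, zero_add, Nat.one_le_cast, Nat.cast_le]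
  exact or_iff_right_of_imp fun hn k hk₁ hk => absurd (hk₁.trans hk) hn

theorem sat_always_imp_F_zero_iff {n : ℕ} (φ : TForm α) :
    sat n (TForm.imp .F φ).always H T 0 ↔ sat n φ H T n ∧ sat n φ T T n := by
  have hcast : ∀ j : ℕ, (j : ℕ∞) + 1 ≤ n ↔ j + 1 ≤ n := fun j => by norm_cast
  simp only [sat, sat_always, sat_F, hcast, Nat.cast_le, zero_le, true_imp_iff]
  constructor
  · intro h
    exact (h n le_rfl).imp (· (by omega)) (· (by omega))
  · rintro ⟨hH, hT⟩ j hj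
    have hfinal : ¬ j + 1 ≤ n → j = n := by omega
    exact ⟨fun h => hfinal h ▸ hH, fun h => hfinal h ▸ hT⟩

theorem sat_dynForm_iff {n : ℕ} (r : List (TLit α) × List (TLit α)) :
    sat n (dynForm r) H T 0 ↔
      ∀ k, 1 ≤ k → k ≤ n → sat n (.imp (conj TLit.form r.1) (disj TLit.form r.2)) H T k :=
  sat_wnext_always_zero_iff _

theorem sat_finForm_iff {n : ℕ} (r : List (RLit α) × List (RLit α)) :
    sat n (finForm r) H T 0 ↔ sat n (.imp (conj RLit.form r.1) (disj RLit.form r.2)) H T n :=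
  (sat_always_imp_F_zero_iff _).trans (and_iff_left_of_imp fun h => ⟨h.2, h.2⟩)

end Satisfaction

theorem rlitSatHT_self_iff {β : Type} (X : Set β) (l : RLit β) :
    rlitSatHT X X l ↔ rlitSatC X l := by
  cases l <;> rfl

theorem sat_imp_conj_disj_iff_rruleSatHT {β γ : Type} {lam : ℕ∞} {H T : ℕ → Set α}
    {Y X : Set γ} {k : ℕ} (f : β → TForm α) (g : β → RLit γ) (B A : List β)
    (hHT : ∀ l, sat lam (f l) H T k ↔ rlitSatHT Y X (g l))
    (hTT : ∀ l, sat lam (f l) T T k ↔ rlitSatC X (g l)) :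
    sat lam (.imp (conj f B) (disj f A)) H T k ↔ rruleSatHT Y X ⟨B.map g, A.map g⟩ := by
  simp only [sat, rruleSatHT, sat_conj, sat_disj, List.forall_mem_map, hHT, hTT]
  simp only [List.mem_map, exists_exists_and_eq_and]

section Translation

variable {n : ℕ} {H T : ℕ → Set α} {Y X : Set (α × ℕ)}

theorem sat_rlitForm_iff (hH : TraceEncodes n H Y) (hT : TraceEncodes n T X) {k : ℕ}
    (hsub : H k ⊆ T k) (hk : k ≤ n) :
    ∀ l : RLit α, sat n l.form H T k ↔ rlitSatHT Y X (trR k l)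
  | .pos a => hH a k hk
  | .neg a => (sat_neg_iff fun h => hsub h).trans (not_congr (hT a k hk))

theorem sat_tlitForm_iff (hH : TraceEncodes n H Y) (hT : TraceEncodes n T X)
    (hsub : ∀ i ≤ n, H i ⊆ T i) {k : ℕ} (hk₁ : 1 ≤ k) (hk : k ≤ n) :
    ∀ l : TLit α, sat n l.form H T k ↔ rlitSatHT Y X (trT k l)
  | .pos a => sat_rlitForm_iff hH hT (hsub k hk) hk (.pos a)
  | .neg a => sat_rlitForm_iff hH hT (hsub k hk) hk (.neg a)
  | .ppos a => (and_iff_right hk₁).trans (hH a (k - 1) (by omega))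
  | .pneg a =>
    (sat_neg_iff (φ := .prev (.atom a)) (And.imp_right fun h => hsub (k - 1) (by omega) h)).trans
      (not_congr ((and_iff_right hk₁).trans (hT a (k - 1) (by omega))))

variable (hH : TraceEncodes n H Y) (hT : TraceEncodes n T X) (hsub : ∀ i ≤ n, H i ⊆ T i)
include hH hT hsub

theorem sat_rlitRule_iff {k : ℕ} (hk : k ≤ n) (p : List (RLit α) × List (RLit α)) :
    sat n (.imp (conj RLit.form p.1) (disj RLit.form p.2)) H T k ↔
      rruleSatHT Y X ⟨p.1.map (trR k), p.2.map (trR k)⟩ :=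
  sat_imp_conj_disj_iff_rruleSatHT _ _ _ _ (sat_rlitForm_iff hH hT (hsub k hk) hk)
    fun l => (sat_rlitForm_iff hT hT subset_rfl hk l).trans (rlitSatHT_self_iff X _)

theorem sat_tlitRule_iff {k : ℕ} (hk₁ : 1 ≤ k) (hk : k ≤ n)
    (p : List (TLit α) × List (TLit α)) :
    sat n (.imp (conj TLit.form p.1) (disj TLit.form p.2)) H T k ↔
      rruleSatHT Y X ⟨p.1.map (trT k), p.2.map (trT k)⟩ :=
  sat_imp_conj_disj_iff_rruleSatHT _ _ _ _ (sat_tlitForm_iff hH hT hsub hk₁ hk)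
    fun l => (sat_tlitForm_iff hT hT (fun _ _ => subset_rfl) hk₁ hk l).trans
      (rlitSatHT_self_iff X _)

theorem progSat_iff_forall_tau (P : TProgram α) :
    ProgSat n H T P ↔ ∀ r ∈ tau n P, rruleSatHT Y X r := by
  have hini := sat_rlitRule_iff hH hT hsub n.zero_le
  have hdyn := fun k hk₁ hk => sat_tlitRule_iff hH hT hsub (k := k) hk₁ hk
  have hfin := sat_rlitRule_iff hH hT hsub le_rfl
  constructor
  · rintro ⟨hP₀, hPdyn, hPfin⟩ r ((⟨p, hp, rfl⟩ | ⟨p, hp, k, hk₁, hk, rfl⟩) | ⟨p, hp, rfl⟩)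
    · exact (hini p).1 (hP₀ p hp)
    · exact (hdyn k hk₁ hk p).1 ((sat_dynForm_iff p).1 (hPdyn p hp) k hk₁ hk)
    · exact (hfin p).1 ((sat_finForm_iff p).1 (hPfin p hp))
  · intro h
    refine ⟨fun p hp => ?_, fun p hp => ?_, fun p hp => ?_⟩
    · exact (hini p).2 (h _ (.inl (.inl ⟨p, hp, rfl⟩)))
    · exact (sat_dynForm_iff p).2 fun k hk₁ hk =>
        (hdyn k hk₁ hk p).2 (h _ (.inl (.inr ⟨p, hp, k, hk₁, hk, rfl⟩)))
    · exact (sat_finForm_iff p).2 ((hfin p).2 (h _ (.inr ⟨p, hp, rfl⟩)))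

end Translation

def stamp (n : ℕ) (H : ℕ → Set α) : Set (α × ℕ) := {p | p.2 ≤ n ∧ p.1 ∈ H p.2}

def unstamp (Y : Set (α × ℕ)) : ℕ → Set α := fun i => {a | (a, i) ∈ Y}

theorem traceEncodes_stamp (n : ℕ) (H : ℕ → Set α) : TraceEncodes n H (stamp n H) :=
  fun _ _ hi => (and_iff_right hi).symm

theorem traceEncodes_unstamp (n : ℕ) (Y : Set (α × ℕ)) : TraceEncodes n (unstamp Y) Y :=
  fun _ _ _ => Iff.rfl

section Subsets

variable {n : ℕ} {H T : ℕ → Set α} {Y X : Set (α × ℕ)}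

theorem subset_iff_of_traceEncodes (hH : TraceEncodes n H Y) (hT : TraceEncodes n T X)
    (hY : ∀ p ∈ Y, p.2 ≤ n) : Y ⊆ X ↔ ∀ i ≤ n, H i ⊆ T i := by
  constructor
  · intro h i hi a ha
    exact (hT a i hi).2 (h ((hH a i hi).1 ha))
  · rintro h ⟨a, i⟩ hp
    have hi := hY _ hp
    exact (hT a i hi).1 (h i hi ((hH a i hi).2 hp))

theorem ssubset_iff_of_traceEncodes (hH : TraceEncodes n H Y) (hT : TraceEncodes n T X)
    (hY : ∀ p ∈ Y, p.2 ≤ n) (hX : ∀ p ∈ X, p.2 ≤ n) :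
    Y ⊂ X ↔ (∀ i ≤ n, H i ⊆ T i) ∧ ∃ i ≤ n, H i ≠ T i := by
  rw [Set.ssubset_def, subset_iff_of_traceEncodes hH hT hY, subset_iff_of_traceEncodes hT hH hX]
  refine and_congr_right fun hsub => ?_
  simp only [not_forall, exists_prop, ne_eq, Set.Subset.antisymm_iff]
  exact exists_congr fun i => and_congr_right fun hi => not_congr (and_iff_right (hsub i hi)).symm

end Subsets

/-- Bounded translation correctness: T is a temporal stable model of P of
    length λ iff the corresponding set X of time-stamped atoms is a stable model of τ_λ(P). -/
theorem bounded_translation {α : Type} (P : TProgram α) (n : ℕ)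
    (T : ℕ → Set α) (X : Set (α × ℕ))
    (hXdom : ∀ p : α × ℕ, p ∈ X → p.2 ≤ n)
    (hcorr : ∀ (a : α) (i : ℕ), i ≤ n → (a ∈ T i ↔ (a, i) ∈ X)) :
    TStable P n T ↔ Stable (tau n P) X := by
  unfold TStable Stable
  rw [progSat_iff_forall_tau hcorr hcorr (fun _ _ => subset_rfl)]
  refine and_congr_right fun _ => not_congr ⟨?_, ?_⟩
  · rintro ⟨H, hlt, hHP⟩
    have hH := traceEncodes_stamp n H
    exact ⟨stamp n H, (ssubset_iff_of_traceEncodes hH hcorr (fun _ hp => hp.1) hXdom).2 hlt,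
      (progSat_iff_forall_tau hH hcorr hlt.1 P).1 hHP⟩
  · rintro ⟨Y, hYX, hYP⟩
    have hH := traceEncodes_unstamp n Y
    have hlt := (ssubset_iff_of_traceEncodes hH hcorr (fun p hp => hXdom p (hYX.1 hp)) hXdom).1 hYX
    exact ⟨unstamp Y, hlt, (progSat_iff_forall_tau hH hcorr hlt.1 P).2 hYP⟩
end
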